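/- arXiv:1904.11403 — 2 statements merged into one kernel-verified Lean document; each statement's English description precedes it below -/
import Mathlib

section
/- Let f ∈ L²((0,1)ⁿ) and h ∈ L²((0,1)ᵐ) be non-constant, and define g(x,ξ) = f(x)·h(ξ). Then the total Sobol sensitivity index of x_i for g is bounded above by that for f: S^g_{T,x_i} ≤ S^f_{T,x_i}. -/
/-!
Everything factorises over the product. With `A = ∫ f²`, `a = ∫ f`, `B = ∫ h²`, `b = ∫ h` and
`C = ∫ (∫ f dxᵢ)²`, the total-effect variance of `xᵢ` for `g` is `(A - C) B` and the variance of
`g` is `A B - a² b²`, so `S^g ≤ S^f` reduces to `(A - C) a² (B - b²) ≥ 0`. Here `B ≥ b²` because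
`Var h ≥ 0`, and `A ≥ C` is Jensen's inequality in the integrated-out coordinate, transported to
the cube by the measure-preserving map `(x, t) ↦ x[i ↦ t]`.
-/

open MeasureTheory

noncomputable section SobolDefs

/-- Uniform probability measure on the open unit cube `(0,1)^n`. -/
def uCube (n : ℕ) : Measure (Fin n → ℝ) :=
  Measure.pi fun _ => volume.restrict (Set.Ioo 0 1)

/-- Mean value of `f`. -/
def mval {α : Type*} [MeasurableSpace α] (μ : Measure α) (f : α → ℝ) : ℝ := ∫ x, f x ∂μ

/-- Integral of the square of `f`. -/
def intSq {α : Type*} [MeasurableSpace α] (μ : Measure α) (f : α → ℝ) : ℝ := ∫ x, (f x) ^ 2 ∂μ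

/-- Variance of `f`. -/
def var' {α : Type*} [MeasurableSpace α] (μ : Measure α) (f : α → ℝ) : ℝ := intSq μ f - (mval μ f) ^ 2

/-- Covariance of `f` and `h`. -/
def cov' {α : Type*} [MeasurableSpace α] (μ : Measure α) (f h : α → ℝ) : ℝ :=
  (∫ x, f x * h x ∂μ) - mval μ f * mval μ h

/-- Conditional mean of `f` obtained by integrating out the coordinate encoded
by the update map `upd` over `(0,1)`. -/
def cMean {α : Type*} [MeasurableSpace α] (upd : α → ℝ → α) (f : α → ℝ) (x : α) : ℝ :=
  ∫ t in Set.Ioo (0 : ℝ) 1, f (upd x t)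

/-- Total-effect variance of the coordinate encoded by `upd`. -/
def tVar {α : Type*} [MeasurableSpace α] (μ : Measure α) (upd : α → ℝ → α) (f : α → ℝ) : ℝ :=
  intSq μ f - ∫ x, (cMean upd f x) ^ 2 ∂μ

/-- Total Sobol sensitivity index of the coordinate encoded by `upd`. -/
def sobolT {α : Type*} [MeasurableSpace α] (μ : Measure α) (upd : α → ℝ → α) (f : α → ℝ) : ℝ :=
  tVar μ upd f / var' μ f

/-- Updating the `i`-th coordinate of a point of the cube. -/
def updC {n : ℕ} (i : Fin n) : (Fin n → ℝ) → ℝ → (Fin n → ℝ) :=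
  fun x t => Function.update x i t

/-- Updating the `i`-th coordinate of the first component of a product point. -/
def updF {n : ℕ} {β : Type*} (i : Fin n) : ((Fin n → ℝ) × β) → ℝ → ((Fin n → ℝ) × β) :=
  fun p t => (Function.update p.1 i t, p.2)

end SobolDefs

open ProbabilityTheory

theorem integral_sq_integral_le_integral_sq {X Y : Type*} [MeasurableSpace X] [MeasurableSpace Y]
    (μ : Measure X) [SFinite μ] (ν : Measure Y) [IsProbabilityMeasure ν] {F : X × Y → ℝ}
    (hF : MemLp F 2 (μ.prod ν)) :
    ∫ x, (∫ y, F (x, y) ∂ν) ^ 2 ∂μ ≤ ∫ p, F p ^ 2 ∂(μ.prod ν) := by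
  have hF_sq : Integrable (fun p => F p ^ 2) (μ.prod ν) := hF.integrable_sq
  rw [integral_prod _ hF_sq]
  refine integral_mono_of_nonneg (.of_forall fun _ => sq_nonneg _) hF_sq.integral_prod_left ?_
  filter_upwards [hF_sq.prod_right_ae, hF.aestronglyMeasurable.prodMk_left] with x hx_sq hx
  have hx_memLp : MemLp (fun y => F (x, y)) 2 ν := (memLp_two_iff_integrable_sq hx).mpr hx_sq
  have hx_var := variance_nonneg (fun y => F (x, y)) ν
  rw [variance_eq_sub hx_memLp] at hx_var
  simpa using hx_var

instance : IsProbabilityMeasure (volume.restrict (Set.Ioo (0 : ℝ) 1)) :=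
  ⟨by simp [Real.volume_Ioo]⟩

instance (n : ℕ) : IsProbabilityMeasure (uCube n) := by
  unfold uCube; infer_instance

theorem preimage_update_univ_pi_eq_prod {ι : Type*} [DecidableEq ι] {α : ι → Type*} (i : ι)
    (s : ∀ j, Set (α j)) :
    (fun p : (∀ j, α j) × α i => Function.update p.1 i p.2) ⁻¹' Set.univ.pi s =
      Set.univ.pi (Function.update s i Set.univ) ×ˢ s i := by
  ext p
  simp only [Set.mem_preimage, Set.mem_univ_pi, Set.mem_prod]
  constructor
  · intro hp
    refine ⟨fun j => ?_, by simpa using hp i⟩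
    rcases eq_or_ne j i with rfl | hj
    · simp
    · simpa [Function.update_of_ne hj] using hp j
  · rintro ⟨hp₁, hp₂⟩ j
    rcases eq_or_ne j i with rfl | hj
    · simpa using hp₂
    · simpa [Function.update_of_ne hj] using hp₁ j

theorem measurePreserving_update_pi {ι : Type*} [Fintype ι] [DecidableEq ι] {α : ι → Type*}
    [∀ j, MeasurableSpace (α j)] (μ : ∀ j, Measure (α j)) [∀ j, SigmaFinite (μ j)] (i : ι)
    [IsProbabilityMeasure (μ i)] :
    MeasurePreserving (fun p : (∀ j, α j) × α i => Function.update p.1 i p.2)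
      ((Measure.pi μ).prod (μ i)) (Measure.pi μ) := by
  refine ⟨measurable_update', (Measure.pi_eq fun s hs => ?_).symm⟩
  rw [Measure.map_apply measurable_update' (.univ_pi hs), preimage_update_univ_pi_eq_prod,
    Measure.prod_prod, Measure.pi_pi, ← Finset.mul_prod_erase _ _ (Finset.mem_univ i),
    ← Finset.mul_prod_erase _ (fun j => μ j (s j)) (Finset.mem_univ i),
    Function.update_self, measure_univ, one_mul, mul_comm]
  congr 1
  exact Finset.prod_congr rfl fun j hj => by rw [Function.update_of_ne (Finset.ne_of_mem_erase hj)]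

theorem integral_cMean_updC_sq_le {n : ℕ} (i : Fin n) {f : (Fin n → ℝ) → ℝ}
    (hf : MemLp f 2 (uCube n)) :
    ∫ x, cMean (updC i) f x ^ 2 ∂uCube n ≤ intSq (uCube n) f := by
  have hT : MeasurePreserving (fun p : (Fin n → ℝ) × ℝ => Function.update p.1 i p.2)
      ((uCube n).prod (volume.restrict (Set.Ioo 0 1))) (uCube n) :=
    measurePreserving_update_pi _ i
  calc ∫ x, cMean (updC i) f x ^ 2 ∂uCube n
      ≤ ∫ p, f (Function.update p.1 i p.2) ^ 2 ∂((uCube n).prod (volume.restrict (Set.Ioo 0 1))) :=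
        integral_sq_integral_le_integral_sq _ _ (hf.comp_measurePreserving hT)
    _ = intSq (uCube n) f := by
        have hmap := integral_map (f := fun x => f x ^ 2) hT.measurable.aemeasurable
          (hT.map_eq ▸ hf.integrable_sq.aestronglyMeasurable)
        rw [hT.map_eq] at hmap
        exact hmap.symm

theorem tVar_updC_nonneg {n : ℕ} (i : Fin n) {f : (Fin n → ℝ) → ℝ} (hf : MemLp f 2 (uCube n)) :
    0 ≤ tVar (uCube n) (updC i) f :=
  sub_nonneg.mpr (integral_cMean_updC_sq_le i hf)

section ProductOfFunctions

variable {α β : Type*} [MeasurableSpace α] [MeasurableSpace β] (μ : Measure α) (ν : Measure β)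
  [SFinite μ] [SFinite ν] (f : α → ℝ) (h : β → ℝ)

theorem mval_prod_mul : mval (μ.prod ν) (fun p => f p.1 * h p.2) = mval μ f * mval ν h :=
  integral_prod_mul f h

theorem intSq_prod_mul : intSq (μ.prod ν) (fun p => f p.1 * h p.2) = intSq μ f * intSq ν h := by
  simp only [intSq, mul_pow]
  exact integral_prod_mul (fun x => f x ^ 2) (fun y => h y ^ 2)

end ProductOfFunctions

theorem cMean_updF_mul {n : ℕ} {β : Type*} [MeasurableSpace β] (i : Fin n)
    (f : (Fin n → ℝ) → ℝ) (h : β → ℝ) (p : (Fin n → ℝ) × β) :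
    cMean (updF i) (fun p => f p.1 * h p.2) p = cMean (updC i) f p.1 * h p.2 :=
  integral_mul_const (h p.2) _

theorem tVar_updF_mul {n : ℕ} {β : Type*} [MeasurableSpace β] (μ : Measure (Fin n → ℝ))
    (ν : Measure β) [SFinite μ] [SFinite ν] (i : Fin n) (f : (Fin n → ℝ) → ℝ) (h : β → ℝ) :
    tVar (μ.prod ν) (updF i) (fun p => f p.1 * h p.2) = tVar μ (updC i) f * intSq ν h := by
  simp only [tVar, intSq_prod_mul, cMean_updF_mul, mul_pow]
  rw [integral_prod_mul (fun x => cMean (updC i) f x ^ 2) (fun y => h y ^ 2), sub_mul]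
  rfl

theorem stmt1_general {n m : ℕ} (i : Fin n) (f : (Fin n → ℝ) → ℝ) (h : (Fin m → ℝ) → ℝ)
    (hf : MemLp f 2 (uCube n))
    (hvf : 0 < var' (uCube n) f) (hvh : 0 < var' (uCube m) h)
    (hvg : 0 < var' ((uCube n).prod (uCube m)) fun p => f p.1 * h p.2) :
    sobolT ((uCube n).prod (uCube m)) (updF i) (fun p => f p.1 * h p.2) ≤
      sobolT (uCube n) (updC i) f := by
  have hT := tVar_updC_nonneg i hf
  unfold var' at hvf hvh hvg
  unfold sobolT var'
  rw [intSq_prod_mul, mval_prod_mul] at hvg ⊢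
  rw [tVar_updF_mul, div_le_div_iff₀ hvg hvf]
  nlinarith [mul_nonneg (mul_nonneg hT (sq_nonneg (mval (uCube n) f))) hvh.le]

/-- Case 1 (upper bound): for `g(x,ξ) = f(x)·h(ξ)`, `S^g_{T,x_i} ≤ S^f_{T,x_i}`. -/
theorem stmt1 {n m : ℕ} (i : Fin n) (f : (Fin n → ℝ) → ℝ) (h : (Fin m → ℝ) → ℝ)
    (hf : MemLp f 2 (uCube n)) (hh : MemLp h 2 (uCube m))
    (hvf : 0 < var' (uCube n) f) (hvh : 0 < var' (uCube m) h)
    (hvg : 0 < var' ((uCube n).prod (uCube m)) fun p => f p.1 * h p.2) :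
    sobolT ((uCube n).prod (uCube m)) (updF i) (fun p => f p.1 * h p.2) ≤
      sobolT (uCube n) (updC i) f :=
  stmt1_general i f h hf hvf hvh hvg
end

section
/- Let f ∈ L²((0,1)ⁿ), h₁ ∈ L²((0,1)ᵐ), h₂ ∈ L²((0,1)^{k+n−1}) where h₂ does not depend on x_i, and define g(x,ξ,η) = f(x)h₁(ξ) + h₂(x_{∼i},η). Then S^g_{T,x_i} = γ·S^f_{T,x_i}, where γ = (∫f² − f₀²)/(∫f² − f₀²(h₁)₀²/∫h₁² + (∫h₂² − (h₂)₀²)/∫h₁² + 2(h₁)₀((fh₂)₀ − f₀(h₂)₀)/∫h₁²). Moreover, if (h₁)₀·(fh₂)₀ ≥ f₀·(h₁)₀·(h₂)₀, then S^g_{T,x_i} ≤ S^f_{T,x_i}. -/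
open MeasureTheory

/-!
Integrating out `x_i` turns `g = f·h₁ + h₂` into `E_i f · h₁ + h₂`, where `E_i f` is the
conditional mean of `f`, because `h₂` does not depend on `x_i`. The three blocks of variables
are independent, so expanding the squares gives
`∫ g² = ∫ f² ∫ h₁² + 2 (h₁)₀ (f h₂)₀ + ∫ h₂²` and the same formula for `E_i g` with `E_i f` in
place of `f`; the cross terms agree since `∫ (E_i f) h₂ = ∫ f h₂`. Hence the total-effect variance
of `g` is `∫ h₁²` times that of `f`, while `Var g = ∫ h₁² · (Var f / γ)`. For the inequality,
`Var g - ∫ h₁² Var f = f₀² Var h₁ + Var h₂ + 2 ((h₁)₀ (f h₂)₀ - f₀ (h₁)₀ (h₂)₀) ≥ 0`.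
-/

open MeasureTheory ProbabilityTheory

local notation "𝕀" => (volume.restrict (Set.Ioo (0 : ℝ) 1) : Measure ℝ)

instance : IsProbabilityMeasure 𝕀 :=
  ⟨by rw [Measure.restrict_apply_univ, Real.volume_Ioo]; norm_num⟩

instance inst_s5 (n : ℕ) : IsProbabilityMeasure (uCube n) := by
  unfold uCube; infer_instance

lemma var'_nonneg {α : Type*} [MeasurableSpace α] {μ : Measure α} [IsProbabilityMeasure μ]
    {f : α → ℝ} (hf : MemLp f 2 μ) : 0 ≤ var' μ f := by
  have h := variance_eq_sub hf ▸ variance_nonneg f μ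
  simpa [var', intSq, mval] using h

section Moments

variable {X C D : Type*} [MeasurableSpace X] [MeasurableSpace C] [MeasurableSpace D]
  {μ : Measure X} {μC : Measure C} {μD : Measure D}

lemma integral_mul_add_prod [SFinite μ] [IsProbabilityMeasure μC] {A B : X → ℝ} {c : C → ℝ}
    (hA : Integrable A μ) (hB : Integrable B μ) (hc : Integrable c μC) :
    ∫ p, (A p.1 * c p.2 + B p.1) ∂(μ.prod μC) = (∫ x, A x ∂μ) * (∫ y, c y ∂μC) + ∫ x, B x ∂μ := by
  have hB' : Integrable (fun p : X × C => B p.1) (μ.prod μC) :=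
    measurePreserving_fst.integrable_comp_of_integrable hB
  rw [integral_add (hA.mul_prod hc) hB', integral_prod_mul, integral_fun_fst, probReal_univ,
    one_smul]

lemma integral_sq_mul_add_prod [SFinite μ] [IsProbabilityMeasure μC] {A B : X → ℝ} {c : C → ℝ}
    (hA : MemLp A 2 μ) (hB : MemLp B 2 μ) (hc : MemLp c 2 μC) :
    ∫ p, (A p.1 * c p.2 + B p.1) ^ 2 ∂(μ.prod μC) =
      (∫ x, A x ^ 2 ∂μ) * (∫ y, c y ^ 2 ∂μC) + 2 * (∫ y, c y ∂μC) * (∫ x, A x * B x ∂μ) +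
        ∫ x, B x ^ 2 ∂μ := by
  have hAB : Integrable (fun x => A x * B x) μ := hA.integrable_mul hB
  have hsq : Integrable (fun p : X × C => A p.1 ^ 2 * c p.2 ^ 2) (μ.prod μC) :=
    hA.integrable_sq.mul_prod hc.integrable_sq
  have hcross : Integrable (fun p : X × C => 2 * (A p.1 * B p.1 * c p.2)) (μ.prod μC) :=
    (hAB.mul_prod (hc.integrable one_le_two)).const_mul 2
  have hB2 : Integrable (fun p : X × C => B p.1 ^ 2) (μ.prod μC) :=
    measurePreserving_fst.integrable_comp_of_integrable hB.integrable_sq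
  calc ∫ p, (A p.1 * c p.2 + B p.1) ^ 2 ∂(μ.prod μC)
      = ∫ p, (A p.1 ^ 2 * c p.2 ^ 2 + 2 * (A p.1 * B p.1 * c p.2) + B p.1 ^ 2) ∂(μ.prod μC) := by
        congr 1 with p; ring
    _ = _ := by
        have hsum : Integrable (fun p : X × C => A p.1 ^ 2 * c p.2 ^ 2 +
            2 * (A p.1 * B p.1 * c p.2)) (μ.prod μC) := hsq.add hcross
        rw [integral_add hsum hB2, integral_add hsq hcross, integral_const_mul,
          integral_prod_mul (fun x => A x ^ 2) (fun y => c y ^ 2),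
          integral_prod_mul (fun x => A x * B x) c, integral_fun_fst (fun x => B x ^ 2),
          probReal_univ, one_smul]
        ring

lemma integral_prod_prod_rearrange [SFinite μ] [SFinite μC] [SFinite μD]
    (F : (X × D) × C → ℝ) :
    ∫ p, F ((p.1, p.2.2), p.2.1) ∂(μ.prod (μC.prod μD)) = ∫ q, F q ∂((μ.prod μD).prod μC) := by
  let ρ : X × (C × D) ≃ᵐ (X × D) × C :=
    ((MeasurableEquiv.refl X).prodCongr MeasurableEquiv.prodComm).trans
      MeasurableEquiv.prodAssoc.symm
  have hρ : MeasurePreserving ρ (μ.prod (μC.prod μD)) ((μ.prod μD).prod μC) :=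
    ((measurePreserving_prodAssoc μ μD μC).symm _).comp
      ((MeasurePreserving.id μ).prod Measure.measurePreserving_swap)
  exact hρ.integral_comp' F

variable [SFinite μ] [IsProbabilityMeasure μC] [IsProbabilityMeasure μD]

lemma mval_prod_mul_add {φ : X → ℝ} {h₁ : C → ℝ} {h₂ : X → D → ℝ} (hφ : Integrable φ μ)
    (hh₁ : Integrable h₁ μC) (hh₂ : Integrable (fun p : X × D => h₂ p.1 p.2) (μ.prod μD)) :
    mval (μ.prod (μC.prod μD)) (fun p => φ p.1 * h₁ p.2.1 + h₂ p.1 p.2.2) =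
      mval μ φ * mval μC h₁ + mval (μ.prod μD) (fun p => h₂ p.1 p.2) := by
  have hφ' : Integrable (fun p : X × D => φ p.1) (μ.prod μD) :=
    measurePreserving_fst.integrable_comp_of_integrable hφ
  rw [mval, integral_prod_prod_rearrange (fun q => φ q.1.1 * h₁ q.2 + h₂ q.1.1 q.1.2),
    integral_mul_add_prod hφ' hh₂ hh₁, integral_fun_fst, probReal_univ, one_smul]
  rfl

lemma intSq_prod_mul_add {φ : X → ℝ} {h₁ : C → ℝ} {h₂ : X → D → ℝ} (hφ : MemLp φ 2 μ)
    (hh₁ : MemLp h₁ 2 μC) (hh₂ : MemLp (fun p : X × D => h₂ p.1 p.2) 2 (μ.prod μD)) :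
    intSq (μ.prod (μC.prod μD)) (fun p => φ p.1 * h₁ p.2.1 + h₂ p.1 p.2.2) =
      intSq μ φ * intSq μC h₁ + 2 * mval μC h₁ * mval (μ.prod μD) (fun p => φ p.1 * h₂ p.1 p.2) +
        intSq (μ.prod μD) (fun p => h₂ p.1 p.2) := by
  have hφ' : MemLp (fun p : X × D => φ p.1) 2 (μ.prod μD) :=
    hφ.comp_measurePreserving measurePreserving_fst
  rw [intSq, integral_prod_prod_rearrange (fun q => (φ q.1.1 * h₁ q.2 + h₂ q.1.1 q.1.2) ^ 2),
    integral_sq_mul_add_prod hφ' hh₂ hh₁, integral_fun_fst (fun x => φ x ^ 2), probReal_univ,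
    one_smul]
  rfl

end Moments

section Resampling

/- The hypothesis `hupd` of this section says that redrawing the coordinate encoded by `upd`
uniformly on `(0,1)` leaves `μ` invariant; this is all that makes `cMean upd` behave like a
conditional expectation. -/

variable {α β : Type*} [MeasurableSpace α] [MeasurableSpace β] {μ : Measure α} [SFinite μ]
  {upd : α → ℝ → α}

lemma ae_integrable_comp_slice (hupd : MeasurePreserving (Function.uncurry upd) (μ.prod 𝕀) μ)
    {ψ : α → ℝ} (hψ : Integrable ψ μ) : ∀ᵐ x ∂μ, Integrable (fun t => ψ (upd x t)) 𝕀 :=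
  (hupd.integrable_comp_of_integrable hψ).prod_right_ae

lemma integral_cMean (hupd : MeasurePreserving (Function.uncurry upd) (μ.prod 𝕀) μ)
    {ψ : α → ℝ} (hψ : Integrable ψ μ) : ∫ x, cMean upd ψ x ∂μ = ∫ x, ψ x ∂μ := by
  calc ∫ x, cMean upd ψ x ∂μ = ∫ p, ψ (Function.uncurry upd p) ∂(μ.prod 𝕀) :=
        (integral_prod _ (hupd.integrable_comp_of_integrable hψ)).symm
    _ = ∫ y, ψ y ∂(Measure.map (Function.uncurry upd) (μ.prod 𝕀)) := by
        refine (integral_map hupd.measurable.aemeasurable ?_).symm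
        rw [hupd.map_eq]
        exact hψ.aestronglyMeasurable
    _ = ∫ x, ψ x ∂μ := by rw [hupd.map_eq]

lemma memLp_cMean_and_integral_sq_le [IsFiniteMeasure μ]
    (hupd : MeasurePreserving (Function.uncurry upd) (μ.prod 𝕀) μ) {ψ : α → ℝ} (hψ : MemLp ψ 2 μ) :
    MemLp (cMean upd ψ) 2 μ ∧ ∫ x, cMean upd ψ x ^ 2 ∂μ ≤ ∫ x, ψ x ^ 2 ∂μ := by
  have hslice : ∀ᵐ x ∂μ, cMean upd ψ x ^ 2 ≤ cMean upd (fun y => ψ y ^ 2) x := by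
    filter_upwards [ae_integrable_comp_slice hupd (hψ.integrable one_le_two),
      ae_integrable_comp_slice hupd hψ.integrable_sq] with x hx hx2
    have := var'_nonneg ((memLp_two_iff_integrable_sq hx.aestronglyMeasurable).2 hx2)
    rw [var', intSq, mval] at this
    unfold cMean
    linarith
  have hdom : Integrable (cMean upd fun y => ψ y ^ 2) μ :=
    (hupd.integrable_comp_of_integrable hψ.integrable_sq).integral_prod_left
  have hmeas : AEStronglyMeasurable (cMean upd ψ) μ :=
    (hψ.aestronglyMeasurable.comp_measurePreserving hupd).integral_prod_right'
  have hsq : Integrable (fun x => cMean upd ψ x ^ 2) μ := by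
    refine hdom.mono' (hmeas.pow 2) ?_
    filter_upwards [hslice] with x hx
    rwa [Real.norm_eq_abs, abs_of_nonneg (sq_nonneg _)]
  refine ⟨(memLp_two_iff_integrable_sq hmeas).2 hsq, ?_⟩
  calc ∫ x, cMean upd ψ x ^ 2 ∂μ ≤ ∫ x, cMean upd (fun y => ψ y ^ 2) x ∂μ :=
        integral_mono_ae hsq hdom hslice
    _ = ∫ x, ψ x ^ 2 ∂μ := integral_cMean hupd hψ.integrable_sq

lemma cMean_mul_of_invariant {ψ φ : α → ℝ} (hφ : ∀ x t, φ (upd x t) = φ x) :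
    cMean upd (fun x => ψ x * φ x) = fun x => cMean upd ψ x * φ x := by
  funext x
  simp only [cMean, hφ, integral_mul_const]

lemma integral_cMean_mul_of_invariant
    (hupd : MeasurePreserving (Function.uncurry upd) (μ.prod 𝕀) μ) {ψ φ : α → ℝ}
    (hψφ : Integrable (fun x => ψ x * φ x) μ) (hφ : ∀ x t, φ (upd x t) = φ x) :
    ∫ x, cMean upd ψ x * φ x ∂μ = ∫ x, ψ x * φ x ∂μ := by
  rw [← integral_cMean hupd hψφ, cMean_mul_of_invariant hφ]

lemma measurePreserving_prod_update
    (hupd : MeasurePreserving (Function.uncurry upd) (μ.prod 𝕀) μ) (ρ : Measure β) [SFinite ρ] :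
    MeasurePreserving (Function.uncurry fun (p : α × β) t => (upd p.1 t, p.2))
      ((μ.prod ρ).prod 𝕀) (μ.prod ρ) := by
  have hswap : MeasurePreserving (fun q : (α × β) × ℝ => ((q.1.1, q.2), q.1.2))
      ((μ.prod ρ).prod 𝕀) ((μ.prod 𝕀).prod ρ) :=
    ((measurePreserving_prodAssoc μ 𝕀 ρ).symm _).comp
      (((MeasurePreserving.id μ).prod Measure.measurePreserving_swap).comp
        (measurePreserving_prodAssoc μ ρ 𝕀))
  exact (hupd.prod (MeasurePreserving.id ρ)).comp hswap

lemma measurePreserving_update_uCube {n : ℕ} (i : Fin n) :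
    MeasurePreserving (Function.uncurry (updC i)) ((uCube n).prod 𝕀) (uCube n) := by
  obtain ⟨n, rfl⟩ := Nat.exists_eq_add_one_of_ne_zero i.pos.ne'
  let e := MeasurableEquiv.piFinSuccAbove (fun _ => ℝ) i
  have he : MeasurePreserving e (uCube (n + 1)) (Measure.prod 𝕀 (uCube n)) :=
    measurePreserving_piFinSuccAbove (fun _ => 𝕀) i
  have hresample : MeasurePreserving (fun q : (ℝ × (Fin n → ℝ)) × ℝ => (q.2, q.1.2))
      ((Measure.prod 𝕀 (uCube n)).prod 𝕀) (Measure.prod 𝕀 (uCube n)) :=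
    Measure.measurePreserving_swap.comp (measurePreserving_snd.prod (MeasurePreserving.id 𝕀))
  convert (he.symm _).comp (hresample.comp (he.prod (MeasurePreserving.id 𝕀))) using 1
  funext p
  exact (Fin.insertNth_removeNth i p.2 p.1).symm

end Resampling

section Sobol

variable {α C D : Type*} [MeasurableSpace α] [MeasurableSpace C] [MeasurableSpace D]
  {μ : Measure α} {μC : Measure C} {μD : Measure D} [IsProbabilityMeasure μC]
  [IsProbabilityMeasure μD] {upd : α → ℝ → α} {φ : α → ℝ} {h₁ : C → ℝ} {h₂ : α → D → ℝ}

lemma cMean_prod_mul_add (hind : ∀ x t η, h₂ (upd x t) η = h₂ x η) {p : α × (C × D)}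
    (hp : Integrable (fun t => φ (upd p.1 t)) 𝕀) :
    cMean (fun (p : α × (C × D)) t => (upd p.1 t, p.2))
        (fun p => φ p.1 * h₁ p.2.1 + h₂ p.1 p.2.2) p =
      cMean upd φ p.1 * h₁ p.2.1 + h₂ p.1 p.2.2 := by
  simp only [cMean, hind]
  rw [integral_add (hp.mul_const _) (integrable_const _), integral_mul_const, integral_const,
    probReal_univ, one_smul]

lemma tVar_prod_mul_add [IsFiniteMeasure μ]
    (hupd : MeasurePreserving (Function.uncurry upd) (μ.prod 𝕀) μ) (hφ : MemLp φ 2 μ)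
    (hh₁ : MemLp h₁ 2 μC) (hh₂ : MemLp (fun p : α × D => h₂ p.1 p.2) 2 (μ.prod μD))
    (hind : ∀ x t η, h₂ (upd x t) η = h₂ x η) :
    tVar (μ.prod (μC.prod μD)) (fun p t => (upd p.1 t, p.2))
        (fun p => φ p.1 * h₁ p.2.1 + h₂ p.1 p.2.2) =
      intSq μC h₁ * tVar μ upd φ := by
  obtain ⟨hcφ, -⟩ := memLp_cMean_and_integral_sq_le hupd hφ
  have hslices : ∀ᵐ p ∂(μ.prod (μC.prod μD)), Integrable (fun t => φ (upd p.1 t)) 𝕀 :=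
    ae_integrable_comp_slice (measurePreserving_prod_update hupd _)
      (measurePreserving_fst.integrable_comp_of_integrable (hφ.integrable one_le_two))
  have hcMean : ∫ p, cMean (fun (p : α × (C × D)) t => (upd p.1 t, p.2))
        (fun p => φ p.1 * h₁ p.2.1 + h₂ p.1 p.2.2) p ^ 2 ∂(μ.prod (μC.prod μD)) =
      intSq (μ.prod (μC.prod μD)) (fun p => cMean upd φ p.1 * h₁ p.2.1 + h₂ p.1 p.2.2) :=
    integral_congr_ae (hslices.mono fun p hp => by simp only [cMean_prod_mul_add hind hp])
  have hcross : mval (μ.prod μD) (fun p => cMean upd φ p.1 * h₂ p.1 p.2) =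
      mval (μ.prod μD) (fun p => φ p.1 * h₂ p.1 p.2) :=
    integral_cMean_mul_of_invariant (measurePreserving_prod_update hupd μD)
      ((hφ.comp_measurePreserving measurePreserving_fst).integrable_mul hh₂)
      (fun p t => hind p.1 t p.2)
  rw [tVar, tVar, hcMean, intSq_prod_mul_add hφ hh₁ hh₂, intSq_prod_mul_add hcφ hh₁ hh₂, hcross]
  simp only [intSq]
  ring

end Sobol

section Algebra

variable {pI p0 I a0 b0 IB2 M T : ℝ}

lemma div_variance_eq_gamma_mul (hV : 0 < pI - p0 ^ 2) (hI : 0 < I) :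
    I * T / (pI * I + 2 * a0 * M + IB2 - (p0 * a0 + b0) ^ 2) =
      (pI - p0 ^ 2) / (pI - p0 ^ 2 * a0 ^ 2 / I + (IB2 - b0 ^ 2) / I +
        2 * a0 * (M - p0 * b0) / I) * (T / (pI - p0 ^ 2)) := by
  have hvar : pI * I + 2 * a0 * M + IB2 - (p0 * a0 + b0) ^ 2 =
      I * (pI - p0 ^ 2 * a0 ^ 2 / I + (IB2 - b0 ^ 2) / I + 2 * a0 * (M - p0 * b0) / I) := by
    field_simp
    ring
  rw [hvar, mul_div_mul_left _ _ hI.ne']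
  field_simp

lemma div_variance_le (hV : 0 < pI - p0 ^ 2) (hI : 0 < I) (hT : 0 ≤ T) (ha : a0 ^ 2 ≤ I)
    (hb : b0 ^ 2 ≤ IB2) (hcov : a0 * M ≥ p0 * a0 * b0) :
    I * T / (pI * I + 2 * a0 * M + IB2 - (p0 * a0 + b0) ^ 2) ≤ T / (pI - p0 ^ 2) := by
  have hvar : pI * I + 2 * a0 * M + IB2 - (p0 * a0 + b0) ^ 2 =
      I * (pI - p0 ^ 2) +
        (p0 ^ 2 * (I - a0 ^ 2) + (IB2 - b0 ^ 2) + 2 * (a0 * M - p0 * a0 * b0)) := by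
    ring
  have hexcess : 0 ≤ p0 ^ 2 * (I - a0 ^ 2) + (IB2 - b0 ^ 2) + 2 * (a0 * M - p0 * a0 * b0) := by
    have := mul_nonneg (sq_nonneg p0) (sub_nonneg.2 ha)
    linarith
  rw [hvar, ← mul_div_mul_left T (pI - p0 ^ 2) hI.ne']
  exact div_le_div_of_nonneg_left (mul_nonneg hI.le hT) (mul_pos hI hV)
    (le_add_of_nonneg_right hexcess)

end Algebra

theorem stmt5_general {n m k : ℕ} (i : Fin n) (f : (Fin n → ℝ) → ℝ)
    (h₁ : (Fin m → ℝ) → ℝ) (h₂ : (Fin n → ℝ) → (Fin k → ℝ) → ℝ)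
    (hf : MemLp f 2 (uCube n)) (hh₁ : MemLp h₁ 2 (uCube m))
    (hh₂ : MemLp (fun p : (Fin n → ℝ) × (Fin k → ℝ) => h₂ p.1 p.2) 2
      ((uCube n).prod (uCube k)))
    (hind : ∀ (x : Fin n → ℝ) (t : ℝ) (η : Fin k → ℝ),
      h₂ (Function.update x i t) η = h₂ x η)
    (hvf : 0 < var' (uCube n) f) (hih₁ : 0 < intSq (uCube m) h₁) :
    sobolT ((uCube n).prod ((uCube m).prod (uCube k))) (updF i)
        (fun p => f p.1 * h₁ p.2.1 + h₂ p.1 p.2.2) =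
      ((intSq (uCube n) f - (mval (uCube n) f) ^ 2) /
          (intSq (uCube n) f -
            (mval (uCube n) f) ^ 2 * (mval (uCube m) h₁) ^ 2 / intSq (uCube m) h₁ +
            (intSq ((uCube n).prod (uCube k)) (fun p => h₂ p.1 p.2) -
              (mval ((uCube n).prod (uCube k)) fun p => h₂ p.1 p.2) ^ 2) /
              intSq (uCube m) h₁ +
            2 * mval (uCube m) h₁ *
              ((mval ((uCube n).prod (uCube k)) fun p => f p.1 * h₂ p.1 p.2) -
                mval (uCube n) f * mval ((uCube n).prod (uCube k)) fun p => h₂ p.1 p.2) /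
              intSq (uCube m) h₁)) *
        sobolT (uCube n) (updC i) f ∧
      (mval (uCube m) h₁ * (mval ((uCube n).prod (uCube k)) fun p => f p.1 * h₂ p.1 p.2) ≥
          mval (uCube n) f * mval (uCube m) h₁ *
            mval ((uCube n).prod (uCube k)) (fun p => h₂ p.1 p.2) →
        sobolT ((uCube n).prod ((uCube m).prod (uCube k))) (updF i)
            (fun p => f p.1 * h₁ p.2.1 + h₂ p.1 p.2.2) ≤
          sobolT (uCube n) (updC i) f) := by
  have hupd := measurePreserving_update_uCube i
  have hT : 0 ≤ tVar (uCube n) (updC i) f :=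
    sub_nonneg.2 (memLp_cMean_and_integral_sq_le hupd hf).2
  have hvh₁ := var'_nonneg hh₁
  have hvh₂ := var'_nonneg hh₂
  rw [var'] at hvf hvh₁ hvh₂
  rw [sobolT, sobolT, var', var', show updF i = fun p t => (updC i p.1 t, p.2) from rfl,
    tVar_prod_mul_add hupd hf hh₁ hh₂ hind, intSq_prod_mul_add hf hh₁ hh₂,
    mval_prod_mul_add (hf.integrable one_le_two) (hh₁.integrable one_le_two)
      (hh₂.integrable one_le_two)]
  exact ⟨div_variance_eq_gamma_mul hvf hih₁,
    div_variance_le hvf hih₁ hT (by linarith) (by linarith)⟩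

/-- Case 3 (Theorem A1): for `g(x,ξ,η) = f(x)h₁(ξ) + h₂(x_{∼i},η)` (with `h₂`
independent of `x_i`), `S^g_{T,x_i} = γ_{f,h₁,h₂} · S^f_{T,x_i}`; and if
`(h₁)₀(fh₂)₀ ≥ f₀(h₁)₀(h₂)₀` then `S^g_{T,x_i} ≤ S^f_{T,x_i}`. -/
theorem stmt5 {n m k : ℕ} (i : Fin n) (f : (Fin n → ℝ) → ℝ)
    (h₁ : (Fin m → ℝ) → ℝ) (h₂ : (Fin n → ℝ) → (Fin k → ℝ) → ℝ)
    (hf : MemLp f 2 (uCube n)) (hh₁ : MemLp h₁ 2 (uCube m))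
    (hh₂ : MemLp (fun p : (Fin n → ℝ) × (Fin k → ℝ) => h₂ p.1 p.2) 2
      ((uCube n).prod (uCube k)))
    (hind : ∀ (x : Fin n → ℝ) (t : ℝ) (η : Fin k → ℝ),
      h₂ (Function.update x i t) η = h₂ x η)
    (hvf : 0 < var' (uCube n) f) (hih₁ : 0 < intSq (uCube m) h₁)
    (hvg : 0 < var' ((uCube n).prod ((uCube m).prod (uCube k)))
      fun p => f p.1 * h₁ p.2.1 + h₂ p.1 p.2.2) :
    sobolT ((uCube n).prod ((uCube m).prod (uCube k))) (updF i)
        (fun p => f p.1 * h₁ p.2.1 + h₂ p.1 p.2.2) =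
      ((intSq (uCube n) f - (mval (uCube n) f) ^ 2) /
          (intSq (uCube n) f -
            (mval (uCube n) f) ^ 2 * (mval (uCube m) h₁) ^ 2 / intSq (uCube m) h₁ +
            (intSq ((uCube n).prod (uCube k)) (fun p => h₂ p.1 p.2) -
              (mval ((uCube n).prod (uCube k)) fun p => h₂ p.1 p.2) ^ 2) /
              intSq (uCube m) h₁ +
            2 * mval (uCube m) h₁ *
              ((mval ((uCube n).prod (uCube k)) fun p => f p.1 * h₂ p.1 p.2) -
                mval (uCube n) f * mval ((uCube n).prod (uCube k)) fun p => h₂ p.1 p.2) /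
              intSq (uCube m) h₁)) *
        sobolT (uCube n) (updC i) f ∧
      (mval (uCube m) h₁ * (mval ((uCube n).prod (uCube k)) fun p => f p.1 * h₂ p.1 p.2) ≥
          mval (uCube n) f * mval (uCube m) h₁ *
            mval ((uCube n).prod (uCube k)) (fun p => h₂ p.1 p.2) →
        sobolT ((uCube n).prod ((uCube m).prod (uCube k))) (updF i)
            (fun p => f p.1 * h₁ p.2.1 + h₂ p.1 p.2.2) ≤
          sobolT (uCube n) (updC i) f) :=
  stmt5_general i f h₁ h₂ hf hh₁ hh₂ hind hvf hih₁
end
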